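/- Let β ∈ (0,1) and λ > 0 with ηλ ≥ 2(1+β). Then the recursion Δ(t+1) = (1 + β − ηλ)Δ(t) − βΔ(t−1) admits an initial condition (Δ(0), Δ(1)) ≠ (0,0) for which |Δ(t)| does not converge to 0; indeed the characteristic polynomial z² − (1+β−ηλ)z + β has a root z with |z| ≥ 1. -/

import Mathlib

open Filter

/-! The characteristic polynomial `p(z) = z² − a z + β`, `a = 1 + β − ηλ`, satisfies
`p(−1) = 2(1+β) − ηλ ≤ 0`, so, being monic, it has a real root `r ≤ −1`. The geometric
sequence `rᵗ` then solves the recursion, starts at `(1, r) ≠ (0, 0)` and has `|rᵗ| ≥ 1`. -/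

theorem exists_root_le_neg_one_of_one_add_add_nonpos (a c : ℝ) (h : 1 + a + c ≤ 0) :
    ∃ r ≤ -1, r ^ 2 - a * r + c = 0 := by
  -- `1 + a + c` is the value at `-1`; it bounds the discriminant below by `(a + 2)²`,
  -- which puts the smaller root `(a - √disc) / 2` at or below `-1`.
  have hdisc : (a + 2) ^ 2 ≤ a ^ 2 - 4 * c := by nlinarith
  set s := Real.sqrt (a ^ 2 - 4 * c)
  have hs_sq : s ^ 2 = a ^ 2 - 4 * c := Real.sq_sqrt ((sq_nonneg _).trans hdisc)
  have hs : a + 2 ≤ s := (le_abs_self _).trans (Real.abs_le_sqrt hdisc)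
  exact ⟨(a - s) / 2, by linarith, by linear_combination hs_sq / 4⟩

theorem pow_add_two_eq_of_sq_eq {R : Type*} [CommRing R] {a c r : R}
    (hr : r ^ 2 = a * r - c) (t : ℕ) : r ^ (t + 2) = a * r ^ (t + 1) - c * r ^ t := by
  linear_combination r ^ t * hr

theorem not_tendsto_abs_pow_nhds_zero {r : ℝ} (hr : 1 ≤ |r|) :
    ¬ Tendsto (fun t : ℕ => |r ^ t|) atTop (nhds 0) := by
  rw [← Function.comp_def abs, ← tendsto_zero_iff_abs_tendsto_zero,
    tendsto_pow_atTop_nhds_zero_iff, not_lt]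
  exact hr

theorem momentum_lms_instability_general (β η lam : ℝ) (h : 2 * (1 + β) ≤ η * lam) :
    (∃ Δ : ℕ → ℝ,
        (∀ t, Δ (t + 2) = (1 + β - η * lam) * Δ (t + 1) - β * Δ t) ∧
        (Δ 0, Δ 1) ≠ (0, 0) ∧
        ¬ Tendsto (fun t => |Δ t|) atTop (nhds 0)) ∧
    (∃ z : ℂ, z ^ 2 - (1 + β - η * lam) * z + β = 0 ∧ 1 ≤ ‖z‖) := by
  obtain ⟨r, hr_le, hr_root⟩ :=
    exists_root_le_neg_one_of_one_add_add_nonpos (1 + β - η * lam) β (by linarith)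
  have hr_abs : 1 ≤ |r| := by rw [abs_of_neg (by linarith)]; linarith
  refine ⟨⟨fun t => r ^ t, pow_add_two_eq_of_sq_eq (by linear_combination hr_root),
    by simp, not_tendsto_abs_pow_nhds_zero hr_abs⟩, ⟨r, ?_, ?_⟩⟩
  · exact_mod_cast congrArg ((↑) : ℝ → ℂ) hr_root
  · rwa [Complex.norm_real, Real.norm_eq_abs]

/-- If `β ∈ (0,1)`, `λ > 0` and `ηλ ≥ 2(1+β)`, the momentum recursion admits a
nonzero initial condition whose solution does not decay to `0`; indeed the
characteristic polynomial `z² − (1+β−ηλ)z + β` has a root of modulus `≥ 1`. -/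
theorem momentum_lms_instability (β η lam : ℝ) (hβ : β ∈ Set.Ioo (0:ℝ) 1)
    (hlam : 0 < lam) (h : 2 * (1 + β) ≤ η * lam) :
    (∃ Δ : ℕ → ℝ,
        (∀ t, Δ (t + 2) = (1 + β - η * lam) * Δ (t + 1) - β * Δ t) ∧
        (Δ 0, Δ 1) ≠ (0, 0) ∧
        ¬ Tendsto (fun t => |Δ t|) atTop (nhds 0)) ∧
    (∃ z : ℂ, z ^ 2 - (1 + β - η * lam) * z + β = 0 ∧ 1 ≤ ‖z‖) :=
  momentum_lms_instability_general β η lam h
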